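/- Under Assumption A, there exist τ₀ > 0 and Q > 0, depending only on d, k, L and T, such that for every N ∈ ℕ with τ = T/N ≤ τ₀, the Gram–Schmidt normalization factor of the constrained discrete HiSD scheme satisfies |Z_{i,n}² − 1 − 2τ v_{i,n−1}ᵀ J(x_{n−1}) v_{i,n−1}| ≤ Q τ² for all 1 ≤ i ≤ k and 1 ≤ n ≤ N, and consequently |1/Z_{i,n} − 1 + τ v_{i,n−1}ᵀ J(x_{n−1}) v_{i,n−1}| ≤ Q τ². -/

import Mathlib

open scoped RealInnerProductSpace BigOperators

noncomputable section

/-!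
Pythagoras in the Gram–Schmidt step gives `Z² = ‖v̂‖² - ‖v̂ - w‖²`, and expanding the transport
gives `‖v̂‖² = 1 + 2τ vᵀJv + τ²‖Jv‖² - (ṽᵀxₙ)²`. Since `v ⊥ xₙ₋₁` and the retraction moves the
point by at most `2τ‖F‖` (the reflection `I - 2Σ vvᵀ` is an isometry), `ṽᵀxₙ = O(τ)`. So the
transported vectors are `O(τ)`-perturbations `δ` of the orthonormal frame, and Gram–Schmidt is
stable under such perturbations: by induction on `i` the `i`-th residual lies within
`(3^(i+1) - 1)/2 · δ` of `vᵢ`, hence `‖v̂ - w‖² = O(τ²)`. This gives the bound on `Z²`, and `1/Z`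
follows by a second-order expansion. On the unit sphere, where the scheme keeps `x`, Assumption A
bounds `F` and `J` uniformly, which makes the constants independent of `n`.
-/

open Finset

section Normalization

variable {V : Type*} [NormedAddCommGroup V] [NormedSpace ℝ V]

theorem norm_inv_norm_smul_sub_le {x y : V} (hx : ‖x‖ = 1) :
    ‖‖y‖⁻¹ • y - x‖ ≤ 2 * ‖y - x‖ := by
  rcases eq_or_ne y 0 with rfl | hy
  · simp [hx]
  have hy' : ‖y‖ ≠ 0 := norm_ne_zero_iff.mpr hy
  have hscale : ‖‖y‖⁻¹ • y - y‖ = |‖x‖ - ‖y‖| := by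
    have : ‖y‖⁻¹ • y - y = (‖y‖⁻¹ - 1) • y := by rw [sub_smul, one_smul]
    rw [this, norm_smul, Real.norm_eq_abs, hx, abs_sub_comm]
    calc |1 - ‖y‖⁻¹| * ‖y‖ = |(1 - ‖y‖⁻¹) * ‖y‖| := by rw [abs_mul, abs_norm]
      _ = |‖y‖ - 1| := by rw [sub_mul, inv_mul_cancel₀ hy', one_mul]
      _ = |1 - ‖y‖| := abs_sub_comm _ _
  calc ‖‖y‖⁻¹ • y - x‖ ≤ ‖‖y‖⁻¹ • y - y‖ + ‖y - x‖ := norm_sub_le_norm_sub_add_norm_sub _ _ _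
    _ ≤ ‖y - x‖ + ‖y - x‖ := by
        rw [hscale, abs_sub_comm]; gcongr; exact abs_norm_sub_norm_le y x
    _ = 2 * ‖y - x‖ := by ring

theorem norm_retraction_sub_le {x : V} (hx : ‖x‖ = 1) {τ : ℝ} (hτ : 0 ≤ τ) (s : V) :
    ‖‖x + τ • s‖⁻¹ • (x + τ • s) - x‖ ≤ 2 * τ * ‖s‖ := by
  simpa [norm_smul, abs_of_nonneg hτ, mul_assoc] using
    norm_inv_norm_smul_sub_le (y := x + τ • s) hx

end Normalization

variable {E : Type*} [NormedAddCommGroup E] [InnerProductSpace ℝ E]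

theorem Orthonormal.norm_sub_two_smul_sum_inner_smul {ι : Type*} {v : ι → E}
    (hv : Orthonormal ℝ v) (s : Finset ι) (h : E) :
    ‖h - (2:ℝ) • ∑ j ∈ s, ⟪v j, h⟫ • v j‖ = ‖h‖ := by
  have hinner : ⟪h, ∑ j ∈ s, ⟪v j, h⟫ • v j⟫ = ∑ j ∈ s, ⟪v j, h⟫ * ⟪v j, h⟫ := by
    simp_rw [inner_sum, real_inner_smul_right, real_inner_comm h]
  have hnorm : ‖∑ j ∈ s, ⟪v j, h⟫ • v j‖ ^ 2 = ∑ j ∈ s, ⟪v j, h⟫ * ⟪v j, h⟫ := by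
    rw [← real_inner_self_eq_norm_sq, hv.inner_sum]; rfl
  refine (sq_eq_sq₀ (norm_nonneg _) (norm_nonneg _)).mp ?_
  rw [norm_sub_sq_real, real_inner_smul_right, norm_smul, mul_pow, hinner, hnorm,
    Real.norm_ofNat]
  ring

section GramSchmidt

variable {k : ℕ}

def gramSchmidtResidual (u q : Fin k → E) (i : Fin k) : E :=
  u i - ∑ j ∈ Iio i, ⟪u i, q j⟫ • q j

def IsNormalizedGramSchmidt (u q : Fin k → E) : Prop :=
  ∀ i, gramSchmidtResidual u q i ≠ 0 ∧
    q i = ‖gramSchmidtResidual u q i‖⁻¹ • gramSchmidtResidual u q i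

theorem inner_gramSchmidtResidual_eq_zero {u q : Fin k → E} {i j : Fin k} (hji : j < i)
    (hq : ∀ l < i, ⟪q l, q j⟫ = if l = j then 1 else 0) :
    ⟪gramSchmidtResidual u q i, q j⟫ = 0 := by
  have hsum : ∑ l ∈ Iio i, ⟪u i, q l⟫ * ⟪q l, q j⟫ = ⟪u i, q j⟫ := by
    rw [sum_congr rfl fun l hl => by rw [hq l (mem_Iio.mp hl), mul_ite, mul_one, mul_zero],
      sum_ite_eq', if_pos (mem_Iio.mpr hji)]
  simp_rw [gramSchmidtResidual, inner_sub_left, sum_inner, real_inner_smul_left, hsum, sub_self]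

theorem two_mul_sum_Iio_three_pow (i : Fin k) :
    2 * ∑ j ∈ Iio i, (3 : ℝ) ^ ((j : ℕ) + 1) = 3 ^ ((i : ℕ) + 1) - 3 := by
  have hrange : ∑ j ∈ Iio i, (3 : ℝ) ^ ((j : ℕ) + 1) = ∑ n ∈ range i, (3 : ℝ) ^ (n + 1) := by
    rw [← Nat.Iio_eq_range, ← Fin.map_valEmbedding_Iio, sum_map]; rfl
  rw [hrange]
  induction (i : ℕ) with
  | zero => simp
  | succ n ih => rw [sum_range_succ, mul_add, ih]; ring

namespace IsNormalizedGramSchmidt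

variable {u q : Fin k → E} (hq : IsNormalizedGramSchmidt u q)
include hq

theorem norm_eq_one (i : Fin k) : ‖q i‖ = 1 := by
  rw [(hq i).2]; exact norm_smul_inv_norm (hq i).1

theorem inner_eq_zero_of_lt {i j : Fin k} (hji : j < i) : ⟪q i, q j⟫ = 0 := by
  induction i using WellFoundedLT.induction generalizing j with
  | _ i ih =>
    have hprefix : ∀ l < i, ⟪q l, q j⟫ = if l = j then 1 else 0 := by
      intro l hl
      rcases lt_trichotomy l j with hlj | rfl | hjl
      · rw [real_inner_comm, ih j hji hlj, if_neg hlj.ne]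
      · rw [if_pos rfl, real_inner_self_eq_norm_sq, hq.norm_eq_one, one_pow]
      · rw [ih l hl hjl, if_neg hjl.ne']
    rw [(hq i).2, real_inner_smul_left, inner_gramSchmidtResidual_eq_zero hji hprefix, mul_zero]

theorem orthonormal : Orthonormal ℝ q := by
  refine ⟨hq.norm_eq_one, fun i j hij => ?_⟩
  rcases hij.lt_or_gt with h | h
  · rw [real_inner_comm]; exact hq.inner_eq_zero_of_lt h
  · exact hq.inner_eq_zero_of_lt h

theorem inner_eq_zero_of_forall {x : E} (hux : ∀ i, ⟪u i, x⟫ = 0) (i : Fin k) :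
    ⟪q i, x⟫ = 0 := by
  induction i using WellFoundedLT.induction with
  | _ i ih =>
    have hw : ⟪gramSchmidtResidual u q i, x⟫ = 0 := by
      rw [gramSchmidtResidual, inner_sub_left, sum_inner, hux, sum_eq_zero fun j hj => by
        rw [real_inner_smul_left, ih j (mem_Iio.mp hj), mul_zero], sub_zero]
    rw [(hq i).2, real_inner_smul_left, hw, mul_zero]

variable {e : Fin k → E} {δ : ℝ} (he : Orthonormal ℝ e) (hδ : ∀ i, ‖u i - e i‖ ≤ δ)
include he hδ

theorem abs_inner_le {i j : Fin k} (hji : j < i) : |⟪u i, q j⟫| ≤ δ + ‖q j - e j‖ := by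
  have hsplit : ⟪u i, q j⟫ = ⟪u i - e i, q j⟫ + ⟪e i, q j - e j⟫ := by
    rw [inner_sub_left, inner_sub_right, he.2 hji.ne']; ring
  calc |⟪u i, q j⟫| ≤ |⟪u i - e i, q j⟫| + |⟪e i, q j - e j⟫| := hsplit ▸ abs_add_le _ _
    _ ≤ ‖u i - e i‖ * ‖q j‖ + ‖e i‖ * ‖q j - e j‖ :=
        add_le_add (abs_real_inner_le_norm _ _) (abs_real_inner_le_norm _ _)
    _ ≤ δ + ‖q j - e j‖ := by rw [hq.norm_eq_one, he.1, mul_one, one_mul]; linarith [hδ i]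

theorem norm_residual_sub_le (i : Fin k) :
    ‖gramSchmidtResidual u q i - e i‖ ≤ δ + ∑ j ∈ Iio i, (δ + ‖q j - e j‖) := by
  have hsplit : gramSchmidtResidual u q i - e i = (u i - e i) - ∑ j ∈ Iio i, ⟪u i, q j⟫ • q j := by
    rw [gramSchmidtResidual]; abel
  rw [hsplit]
  refine (norm_sub_le _ _).trans (add_le_add (hδ i) ((norm_sum_le _ _).trans (sum_le_sum ?_)))
  intro j hj
  rw [norm_smul, hq.norm_eq_one, mul_one, Real.norm_eq_abs]
  exact hq.abs_inner_le he hδ (mem_Iio.mp hj)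

theorem norm_residual_sub_le_three_pow (i : Fin k) :
    ‖gramSchmidtResidual u q i - e i‖ ≤ (3 ^ ((i : ℕ) + 1) - 1) / 2 * δ := by
  induction i using WellFoundedLT.induction with
  | _ i ih =>
    have hterm : ∀ j ∈ Iio i, δ + ‖q j - e j‖ ≤ 3 ^ ((j : ℕ) + 1) * δ := fun j hj =>
      calc δ + ‖q j - e j‖ ≤ δ + 2 * ‖gramSchmidtResidual u q j - e j‖ := by
            rw [(hq j).2]; gcongr; exact norm_inv_norm_smul_sub_le (he.1 j)
        _ ≤ δ + 2 * ((3 ^ ((j : ℕ) + 1) - 1) / 2 * δ) := by gcongr; exact ih j (mem_Iio.mp hj)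
        _ = 3 ^ ((j : ℕ) + 1) * δ := by ring
    calc ‖gramSchmidtResidual u q i - e i‖ ≤ δ + ∑ j ∈ Iio i, (δ + ‖q j - e j‖) :=
          hq.norm_residual_sub_le he hδ i
      _ ≤ δ + ∑ j ∈ Iio i, 3 ^ ((j : ℕ) + 1) * δ := by gcongr with j hj; exact hterm j hj
      _ = (3 ^ ((i : ℕ) + 1) - 1) / 2 * δ := by
          rw [← sum_mul]; linear_combination (δ / 2) * two_mul_sum_Iio_three_pow i

theorem sq_norm_sub_sq_norm_residual_le (i : Fin k) :
    0 ≤ ‖u i‖ ^ 2 - ‖gramSchmidtResidual u q i‖ ^ 2 ∧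
      ‖u i‖ ^ 2 - ‖gramSchmidtResidual u q i‖ ^ 2 ≤ (3 ^ k * δ) ^ 2 := by
  set r := gramSchmidtResidual u q i
  have hproj : u i - r = ∑ j ∈ Iio i, ⟪u i, q j⟫ • q j := by simp [r, gramSchmidtResidual]
  have hperp : ⟪r, u i - r⟫ = 0 := by
    rw [hproj, inner_sum]
    refine sum_eq_zero fun j hj => ?_
    rw [real_inner_smul_right, inner_gramSchmidtResidual_eq_zero (mem_Iio.mp hj)
      fun l _ => orthonormal_iff_ite.mp hq.orthonormal l j, mul_zero]
  have hpyth : ‖u i‖ ^ 2 - ‖r‖ ^ 2 = ‖u i - r‖ ^ 2 := by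
    have := norm_add_sq_eq_norm_sq_add_norm_sq_real hperp
    rw [add_sub_cancel] at this
    linarith
  have hδ0 : 0 ≤ δ := (norm_nonneg _).trans (hδ i)
  have hpow : (3 : ℝ) ^ ((i : ℕ) + 1) ≤ 3 ^ k := pow_le_pow_right₀ (by norm_num) i.isLt
  have hdist : ‖u i - r‖ ≤ 3 ^ k * δ :=
    calc ‖u i - r‖ ≤ ‖u i - e i‖ + ‖r - e i‖ := by
          rw [norm_sub_rev r]; exact norm_sub_le_norm_sub_add_norm_sub _ _ _
      _ ≤ δ + (3 ^ ((i : ℕ) + 1) - 1) / 2 * δ :=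
          add_le_add (hδ i) (hq.norm_residual_sub_le_three_pow he hδ i)
      _ ≤ 3 ^ k * δ := by
          have h1 : (1 : ℝ) ≤ 3 ^ ((i : ℕ) + 1) := one_le_pow₀ (by norm_num)
          nlinarith
  rw [hpyth]
  exact ⟨sq_nonneg _, pow_le_pow_left₀ (norm_nonneg _) hdist 2⟩

end IsNormalizedGramSchmidt

end GramSchmidt

theorem abs_inv_sub_one_add_le {Z b η : ℝ} (hZ : 0 ≤ Z) (hb : |b| ≤ 1 / 4) (hη : η ≤ 1 / 4)
    (h : |Z ^ 2 - 1 - 2 * b| ≤ η) : |Z⁻¹ - 1 + b| ≤ 8 * b ^ 2 + 4 * η := by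
  obtain ⟨hb₁, hb₂⟩ := abs_le.mp hb
  obtain ⟨h₁, h₂⟩ := abs_le.mp h
  have hZ₂ : 1 / 2 ≤ Z := by nlinarith
  have hden : 1 / 2 ≤ Z * (1 + Z * (1 - b)) := by nlinarith
  -- `1 - Z²(1-b)²` vanishes to second order once `Z² ≈ 1 + 2b`
  have hkey : (Z⁻¹ - 1 + b) * (Z * (1 + Z * (1 - b))) =
      b ^ 2 * (3 - 2 * b) - (Z ^ 2 - 1 - 2 * b) * (1 - b) ^ 2 := by
    field_simp; ring
  have hnum : |b ^ 2 * (3 - 2 * b) - (Z ^ 2 - 1 - 2 * b) * (1 - b) ^ 2| ≤ 4 * b ^ 2 + 2 * η := by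
    refine (abs_sub _ _).trans (add_le_add ?_ ?_)
    · rw [abs_mul, abs_of_nonneg (sq_nonneg b), abs_of_pos (by linarith)]
      nlinarith [sq_nonneg b]
    · rw [abs_mul, abs_of_nonneg (sq_nonneg (1 - b))]
      have hsq : (1 - b) ^ 2 ≤ 2 := by nlinarith
      calc |Z ^ 2 - 1 - 2 * b| * (1 - b) ^ 2 ≤ η * 2 := by
            gcongr; exact (abs_nonneg _).trans h
        _ = 2 * η := mul_comm _ _
  have hprod : |Z⁻¹ - 1 + b| * (Z * (1 + Z * (1 - b))) ≤ 4 * b ^ 2 + 2 * η := by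
    rwa [← abs_of_pos (a := Z * (1 + Z * (1 - b))) (by linarith), ← abs_mul, hkey]
  nlinarith [abs_nonneg (Z⁻¹ - 1 + b)]

section Step

variable {k : ℕ} {τ M : ℝ} {A : E →L[ℝ] E} {u x x' : E}

def hisdDirection (v : Fin k → E) (f : E) : E :=
  f - (2 : ℝ) • ∑ j, ⟪v j, f⟫ • v j

def transportStep (τ : ℝ) (A : E →L[ℝ] E) (x' u : E) : E :=
  u + τ • A u - ⟪u + τ • A u, x'⟫ • x'

theorem norm_hisdDirection {v : Fin k → E} (hv : Orthonormal ℝ v) (f : E) :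
    ‖hisdDirection v f‖ = ‖f‖ :=
  hv.norm_sub_two_smul_sum_inner_smul univ f

theorem inner_transportStep_eq_zero (hx' : ‖x'‖ = 1) : ⟪transportStep τ A x' u, x'⟫ = 0 := by
  rw [transportStep, inner_sub_left, real_inner_smul_left, real_inner_self_eq_norm_sq, hx']
  ring

theorem sq_norm_transportStep (hu : ‖u‖ = 1) (hx' : ‖x'‖ = 1) :
    ‖transportStep τ A x' u‖ ^ 2 =
      1 + 2 * τ * ⟪u, A u⟫ + τ ^ 2 * ‖A u‖ ^ 2 - ⟪u + τ • A u, x'⟫ ^ 2 := by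
  have hupdate : ‖u + τ • A u‖ ^ 2 = 1 + 2 * τ * ⟪u, A u⟫ + τ ^ 2 * ‖A u‖ ^ 2 := by
    rw [norm_add_sq_real, real_inner_smul_right, norm_smul, hu, Real.norm_eq_abs, mul_pow,
      sq_abs]
    ring
  rw [transportStep, norm_sub_sq_real, real_inner_smul_right, norm_smul, hx', Real.norm_eq_abs,
    mul_one, sq_abs, hupdate]
  ring

theorem norm_apply_le_of_norm_eq_one (hA : ‖A‖ ≤ M) (hu : ‖u‖ = 1) : ‖A u‖ ≤ M :=
  (A.le_opNorm u).trans (by rw [hu, mul_one]; exact hA)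

theorem IsNormalizedGramSchmidt.transportStep_invariants {y : E} {v v' : Fin k → E} (hy : y ≠ 0)
    (hx' : x' = ‖y‖⁻¹ • y)
    (hv' : IsNormalizedGramSchmidt (fun i => transportStep τ A x' (v i)) v') :
    ‖x'‖ = 1 ∧ Orthonormal ℝ v' ∧ ∀ i, ⟪v' i, x'⟫ = 0 := by
  have hx'1 : ‖x'‖ = 1 := hx' ▸ norm_smul_inv_norm hy
  exact ⟨hx'1, hv'.orthonormal,
    hv'.inner_eq_zero_of_forall fun _ => inner_transportStep_eq_zero hx'1⟩

variable (hτ : 0 ≤ τ) (hA : ‖A‖ ≤ M) (hx' : ‖x'‖ = 1) (hxx' : ‖x' - x‖ ≤ 2 * M * τ)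
include hτ hA hx' hxx'

theorem abs_inner_add_smul_apply_le (hu : ‖u‖ = 1) (hux : ⟪u, x⟫ = 0) :
    |⟪u + τ • A u, x'⟫| ≤ 3 * M * τ := by
  have hsplit : ⟪u + τ • A u, x'⟫ = ⟪u, x' - x⟫ + τ * ⟪A u, x'⟫ := by
    rw [inner_add_left, inner_sub_right, hux, real_inner_smul_left, sub_zero]
  have hAu := norm_apply_le_of_norm_eq_one hA hu
  calc |⟪u + τ • A u, x'⟫| ≤ |⟪u, x' - x⟫| + τ * |⟪A u, x'⟫| := by
        rw [hsplit, ← abs_of_nonneg hτ, ← abs_mul, abs_of_nonneg hτ]; exact abs_add_le _ _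
    _ ≤ ‖u‖ * ‖x' - x‖ + τ * (‖A u‖ * ‖x'‖) := by
        gcongr <;> exact abs_real_inner_le_norm _ _
    _ ≤ 3 * M * τ := by rw [hu, hx', one_mul, mul_one]; nlinarith

theorem norm_transportStep_sub_le (hu : ‖u‖ = 1) (hux : ⟪u, x⟫ = 0) :
    ‖transportStep τ A x' u - u‖ ≤ 4 * M * τ := by
  have hAu := norm_apply_le_of_norm_eq_one hA hu
  have hsplit : transportStep τ A x' u - u = τ • A u - ⟪u + τ • A u, x'⟫ • x' := by
    rw [transportStep]; abel
  calc ‖transportStep τ A x' u - u‖ ≤ ‖τ • A u‖ + ‖⟪u + τ • A u, x'⟫ • x'‖ := by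
        rw [hsplit]; exact norm_sub_le _ _
    _ = τ * ‖A u‖ + |⟪u + τ • A u, x'⟫| := by
        rw [norm_smul, norm_smul, hx', mul_one, Real.norm_eq_abs, Real.norm_eq_abs,
          abs_of_nonneg hτ]
    _ ≤ 4 * M * τ := by
        nlinarith [abs_inner_add_smul_apply_le hτ hA hx' hxx' hu hux]

theorem abs_sq_norm_gramSchmidtResidual_sub_le {v v' : Fin k → E} (hv : Orthonormal ℝ v)
    (hvx : ∀ i, ⟪v i, x⟫ = 0)
    (hv' : IsNormalizedGramSchmidt (fun i => transportStep τ A x' (v i)) v') (i : Fin k) :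
    |‖gramSchmidtResidual (fun i => transportStep τ A x' (v i)) v' i‖ ^ 2 - 1
      - 2 * τ * ⟪v i, A (v i)⟫| ≤ (5 * 3 ^ k * M * τ) ^ 2 := by
  have hAv := norm_apply_le_of_norm_eq_one hA (hv.1 i)
  have hc := abs_inner_add_smul_apply_le hτ hA hx' hxx' (hv.1 i) (hvx i)
  obtain ⟨hgs₀, hgs⟩ := hv'.sq_norm_sub_sq_norm_residual_le hv
    (fun j => norm_transportStep_sub_le hτ hA hx' hxx' (hv.1 j) (hvx j)) i
  rw [sq_norm_transportStep (hv.1 i) hx'] at hgs₀ hgs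
  have hM : 0 ≤ M := (norm_nonneg _).trans hA
  have hc2 : ⟪v i + τ • A (v i), x'⟫ ^ 2 ≤ 9 * (M * τ) ^ 2 := by
    rw [← sq_abs]; nlinarith [abs_nonneg ⟪v i + τ • A (v i), x'⟫]
  have hAv2 : τ ^ 2 * ‖A (v i)‖ ^ 2 ≤ (M * τ) ^ 2 := by
    rw [mul_pow, mul_comm]; gcongr
  have h9 : (M * τ) ^ 2 ≤ (3 ^ k) ^ 2 * (M * τ) ^ 2 :=
    le_mul_of_one_le_left (sq_nonneg _) (one_le_pow₀ (one_le_pow₀ (by norm_num)))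
  rw [abs_le]
  constructor <;> nlinarith [sq_nonneg (M * τ), mul_nonneg (sq_nonneg τ) (sq_nonneg ‖A (v i)‖)]

theorem abs_inv_norm_gramSchmidtResidual_sub_le {v v' : Fin k → E} (hv : Orthonormal ℝ v)
    (hvx : ∀ i, ⟪v i, x⟫ = 0)
    (hv' : IsNormalizedGramSchmidt (fun i => transportStep τ A x' (v i)) v')
    (hsmall : 5 * 3 ^ k * M * τ ≤ 1 / 4) (i : Fin k) :
    |‖gramSchmidtResidual (fun i => transportStep τ A x' (v i)) v' i‖⁻¹ - 1
      + τ * ⟪v i, A (v i)⟫| ≤ 5 * (5 * 3 ^ k * M * τ) ^ 2 := by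
  have hZ := abs_sq_norm_gramSchmidtResidual_sub_le hτ hA hx' hxx' hv hvx hv' i
  rw [mul_assoc 2] at hZ
  have hM : 0 ≤ M := (norm_nonneg _).trans hA
  have hMτ : 5 * (M * τ) ≤ 5 * 3 ^ k * M * τ := by
    have : (1 : ℝ) ≤ 3 ^ k := one_le_pow₀ (by norm_num)
    nlinarith [mul_nonneg hM hτ]
  have hb : |τ * ⟪v i, A (v i)⟫| ≤ M * τ := by
    rw [abs_mul, abs_of_nonneg hτ, mul_comm M]
    gcongr
    exact (abs_real_inner_le_norm _ _).trans
      (by rw [hv.1 i, one_mul]; exact norm_apply_le_of_norm_eq_one hA (hv.1 i))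
  have hMτ0 : 0 ≤ M * τ := mul_nonneg hM hτ
  refine (abs_inv_sub_one_add_le (norm_nonneg _) (by linarith) (by nlinarith) hZ).trans ?_
  have hb2 : (τ * ⟪v i, A (v i)⟫) ^ 2 ≤ (M * τ) ^ 2 := by
    rw [← sq_abs]; exact pow_le_pow_left₀ (abs_nonneg _) hb 2
  nlinarith

end Step

theorem norm_le_of_lipschitz_of_norm_eq_one {F : E → E} {J : E → E →L[ℝ] E} {L : ℝ} (hL : 0 ≤ L)
    (hLip : ∀ x₁ x₂ : E, ‖J x₂ - J x₁‖ + ‖F x₂ - F x₁‖ ≤ L * ‖x₂ - x₁‖)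
    (hgrow : ∀ x : E, ‖F x‖ ≤ L * (1 + ‖x‖)) {x₀ y : E} (hx₀ : ‖x₀‖ = 1) (hy : ‖y‖ = 1) :
    ‖F y‖ ≤ ‖J x₀‖ + 2 * L ∧ ‖J y‖ ≤ ‖J x₀‖ + 2 * L := by
  have hdist : ‖y - x₀‖ ≤ 2 := (norm_sub_le _ _).trans (by rw [hy, hx₀]; norm_num)
  have hJ : ‖J y - J x₀‖ ≤ L * 2 :=
    (le_add_of_nonneg_right (norm_nonneg _)).trans ((hLip x₀ y).trans (by gcongr))
  constructor
  · have := hgrow y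
    rw [hy] at this
    linarith [norm_nonneg (J x₀)]
  · linarith [norm_le_insert' (J y) (J x₀)]

theorem hisd_stmt15_general
    (d k : ℕ)
    (F : EuclideanSpace ℝ (Fin d) → EuclideanSpace ℝ (Fin d))
    (J : EuclideanSpace ℝ (Fin d) → (EuclideanSpace ℝ (Fin d) →L[ℝ] EuclideanSpace ℝ (Fin d)))
    (L : ℝ) (hL : 0 < L)
    (hLip : ∀ x₁ x₂ : EuclideanSpace ℝ (Fin d), ‖J x₂ - J x₁‖ + ‖F x₂ - F x₁‖ ≤ L * ‖x₂ - x₁‖)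
    (hgrow : ∀ x : EuclideanSpace ℝ (Fin d), ‖F x‖ ≤ L * (1 + ‖x‖))
    (T : ℝ) (hT : 0 < T)
    (x₀ : EuclideanSpace ℝ (Fin d)) (hx₀ : ‖x₀‖ = 1)
    (v₀ : Fin k → EuclideanSpace ℝ (Fin d))
    (hv₀ : ∀ i j : Fin k, ⟪v₀ i, v₀ j⟫ = if i = j then (1:ℝ) else 0)
    (hv₀x : ∀ i : Fin k, ⟪v₀ i, x₀⟫ = 0) :
    ∃ τ₀ > (0:ℝ), ∃ Q > (0:ℝ), ∀ (N : ℕ) (τ : ℝ), 0 < N → τ = T / N → τ ≤ τ₀ →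
      ∀ (x : ℕ → EuclideanSpace ℝ (Fin d)) (v : ℕ → Fin k → EuclideanSpace ℝ (Fin d)),
        x 0 = x₀ → v 0 = v₀ →
        (∀ n < N,
          let xt := x n + τ • (F (x n) - (2:ℝ) • ∑ j, ⟪v n j, F (x n)⟫ • v n j)
          xt ≠ 0 ∧ x (n+1) = ‖xt‖⁻¹ • xt) →
        (∀ n < N, ∀ i : Fin k,
          let vt := v n i + τ • J (x n) (v n i)
          let vh := vt - ⟪vt, x (n+1)⟫ • x (n+1)
          let w := vh - ∑ j ∈ Finset.Iio i, ⟪vh, v (n+1) j⟫ • v (n+1) j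
          w ≠ 0 ∧ v (n+1) i = ‖w‖⁻¹ • w) →
        ∀ n < N, ∀ i : Fin k,
          let vt := v n i + τ • J (x n) (v n i)
          let vh := vt - ⟪vt, x (n+1)⟫ • x (n+1)
          let Z := ‖vh - ∑ j ∈ Finset.Iio i, ⟪vh, v (n+1) j⟫ • v (n+1) j‖
          |Z^2 - 1 - 2 * τ * ⟪v n i, J (x n) (v n i)⟫| ≤ Q * τ^2 ∧
            |Z⁻¹ - 1 + τ * ⟪v n i, J (x n) (v n i)⟫| ≤ Q * τ^2 := by
  set M := ‖J x₀‖ + 2 * L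
  have hbound {y} (hy : ‖y‖ = 1) := norm_le_of_lipschitz_of_norm_eq_one hL.le hLip hgrow hx₀ hy
  have hM : 0 < M := by positivity
  refine ⟨(4 * (5 * 3 ^ k * M))⁻¹, by positivity, 5 * (5 * 3 ^ k * M) ^ 2, by positivity, ?_⟩
  intro N τ _ hτ hτ₀ x v hx0 hv0 hxs hvs n hn i
  have hτ0 : 0 ≤ τ := hτ ▸ by positivity
  have hsmall : 5 * 3 ^ k * M * τ ≤ 1 / 4 := by
    calc 5 * 3 ^ k * M * τ ≤ 5 * 3 ^ k * M * (4 * (5 * 3 ^ k * M))⁻¹ := by gcongr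
      _ = 1 / 4 := by field_simp [hM.ne']
  have hgs : ∀ m < N, IsNormalizedGramSchmidt
      (fun i => transportStep τ (J (x m)) (x (m + 1)) (v m i)) (v (m + 1)) := hvs
  have hstate : ‖x n‖ = 1 ∧ Orthonormal ℝ (v n) ∧ ∀ i, ⟪v n i, x n⟫ = 0 := by
    cases n with
    | zero => exact ⟨hx0 ▸ hx₀, hv0 ▸ orthonormal_iff_ite.mpr hv₀, hv0 ▸ hx0 ▸ hv₀x⟩
    | succ m =>
      have hm : m < N := Nat.lt_of_succ_lt hn
      exact (hgs m hm).transportStep_invariants (hxs m hm).1 (hxs m hm).2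
  obtain ⟨hx, hv, hvx⟩ := hstate
  obtain ⟨hx', -, -⟩ := (hgs n hn).transportStep_invariants (hxs n hn).1 (hxs n hn).2
  have hxx' : ‖x (n + 1) - x n‖ ≤ 2 * M * τ := by
    rw [(hxs n hn).2]
    refine (norm_retraction_sub_le hx hτ0 (hisdDirection (v n) (F (x n)))).trans ?_
    rw [norm_hisdDirection hv]
    nlinarith [(hbound hx).1]
  have hJ := (hbound hx).2
  constructor
  · exact (abs_sq_norm_gramSchmidtResidual_sub_le hτ0 hJ hx' hxx' hv hvx (hgs n hn) i).trans
      (by nlinarith)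
  · exact (abs_inv_norm_gramSchmidtResidual_sub_le hτ0 hJ hx' hxx' hv hvx (hgs n hn) hsmall
      i).trans (by nlinarith)

theorem hisd_stmt15
    (d k : ℕ) (hd : 1 ≤ d) (hk : 1 ≤ k) (hkd : k ≤ d)
    (F : EuclideanSpace ℝ (Fin d) → EuclideanSpace ℝ (Fin d))
    (J : EuclideanSpace ℝ (Fin d) → (EuclideanSpace ℝ (Fin d) →L[ℝ] EuclideanSpace ℝ (Fin d)))
    (hJsymm : ∀ x u w, ⟪J x u, w⟫ = ⟪u, J x w⟫)
    (L : ℝ) (hL : 0 < L)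
    (hLip : ∀ x₁ x₂ : EuclideanSpace ℝ (Fin d), ‖J x₂ - J x₁‖ + ‖F x₂ - F x₁‖ ≤ L * ‖x₂ - x₁‖)
    (hgrow : ∀ x : EuclideanSpace ℝ (Fin d), ‖F x‖ ≤ L * (1 + ‖x‖))
    (T : ℝ) (hT : 0 < T)
    (x₀ : EuclideanSpace ℝ (Fin d)) (hx₀ : ‖x₀‖ = 1)
    (v₀ : Fin k → EuclideanSpace ℝ (Fin d))
    (hv₀ : ∀ i j : Fin k, ⟪v₀ i, v₀ j⟫ = if i = j then (1:ℝ) else 0)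
    (hv₀x : ∀ i : Fin k, ⟪v₀ i, x₀⟫ = 0) :
    ∃ τ₀ > (0:ℝ), ∃ Q > (0:ℝ), ∀ (N : ℕ) (τ : ℝ), 0 < N → τ = T / N → τ ≤ τ₀ →
      ∀ (x : ℕ → EuclideanSpace ℝ (Fin d)) (v : ℕ → Fin k → EuclideanSpace ℝ (Fin d)),
        x 0 = x₀ → v 0 = v₀ →
        (∀ n < N,
          let xt := x n + τ • (F (x n) - (2:ℝ) • ∑ j, ⟪v n j, F (x n)⟫ • v n j)
          xt ≠ 0 ∧ x (n+1) = ‖xt‖⁻¹ • xt) →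
        (∀ n < N, ∀ i : Fin k,
          let vt := v n i + τ • J (x n) (v n i)
          let vh := vt - ⟪vt, x (n+1)⟫ • x (n+1)
          let w := vh - ∑ j ∈ Finset.Iio i, ⟪vh, v (n+1) j⟫ • v (n+1) j
          w ≠ 0 ∧ v (n+1) i = ‖w‖⁻¹ • w) →
        ∀ n < N, ∀ i : Fin k,
          let vt := v n i + τ • J (x n) (v n i)
          let vh := vt - ⟪vt, x (n+1)⟫ • x (n+1)
          let Z := ‖vh - ∑ j ∈ Finset.Iio i, ⟪vh, v (n+1) j⟫ • v (n+1) j‖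
          |Z^2 - 1 - 2 * τ * ⟪v n i, J (x n) (v n i)⟫| ≤ Q * τ^2 ∧
            |Z⁻¹ - 1 + τ * ⟪v n i, J (x n) (v n i)⟫| ≤ Q * τ^2 :=
  hisd_stmt15_general d k F J L hL hLip hgrow T hT x₀ hx₀ v₀ hv₀ hv₀x
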